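/- arXiv:2406.15184 — 2 statements merged into one kernel-verified Lean document; each statement's English description precedes it below -/
import Mathlib

section
/- Post's Completeness Theorem. A set F of Boolean functions (finitary operations on the two-element set {0,1}) is complete if and only if there exist not necessarily distinct functions f₁,…,f₅ ∈ F such that: f₁ is not monotone with respect to the order 0 ≤ 1 (i.e. f₁ does not preserve the coordinatewise order); f₂ does not satisfy f₂(0,…,0) = 0; f₃ does not satisfy f₃(1,…,1) = 1; f₄ is not self-dual, i.e. f₄ is not invariant under switching the roles of 0 and 1 (there is a tuple (a₁,…,aₙ) with f₄(¬a₁,…,¬aₙ) ≠ ¬f₄(a₁,…,aₙ)); and f₅ is not linear, i.e. f₅ cannot be written in the form c₀ + c₁x₁ + ⋯ + cₙxₙ over the two-element field Z₂. -/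
universe u

/-- The type of finitary operations (of positive arity `n + 1`) on `A`. -/
abbrev Ops (A : Type u) : Type u := Σ n : ℕ, (Fin (n + 1) → A) → A

/-- A set of finitary operations on `A` is a clone if it contains all projection
operations and is closed under composition. -/
def IsClone {A : Type u} (C : Set (Ops A)) : Prop :=
  (∀ (n : ℕ) (i : Fin (n + 1)), (⟨n, fun x => x i⟩ : Ops A) ∈ C) ∧
  ∀ (n m : ℕ) (f : (Fin (n + 1) → A) → A) (g : Fin (n + 1) → (Fin (m + 1) → A) → A),
    (⟨n, f⟩ : Ops A) ∈ C → (∀ i, (⟨m, g i⟩ : Ops A) ∈ C) →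
    (⟨m, fun x => f fun i => g i x⟩ : Ops A) ∈ C

/-- The clone generated by a set `F` of operations: the least clone containing `F`. -/
def cloneGen {A : Type u} (F : Set (Ops A)) : Set (Ops A) :=
  ⋂₀ {C : Set (Ops A) | IsClone C ∧ F ⊆ C}

/-- The clone of all projection operations on `A`. -/
def projClone (A : Type u) : Set (Ops A) :=
  {f : Ops A | ∃ i : Fin (f.1 + 1), f.2 = fun x => x i}

/-- A clone `M` is maximal if it is a proper subclone of the clone of all operations
and the clone of all operations is the only clone properly containing it. -/
def IsMaximalClone {A : Type u} (M : Set (Ops A)) : Prop :=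
  IsClone M ∧ M ≠ Set.univ ∧
    ∀ D : Set (Ops A), IsClone D → M ⊆ D → D = M ∨ D = Set.univ

/-- A clone `C` is minimal if the clone of projections is its unique proper subclone. -/
def IsMinimalClone {A : Type u} (C : Set (Ops A)) : Prop :=
  IsClone C ∧ C ≠ projClone A ∧
    ∀ D : Set (Ops A), IsClone D → D ⊆ C → D = projClone A ∨ D = C

/-- An `n`-ary operation `f` preserves a `k`-ary relation `ρ` if applying `f`
coordinatewise to tuples from `ρ` always yields a tuple in `ρ`. -/
def Preserves {A : Type u} {n k : ℕ} (f : (Fin n → A) → A) (ρ : Set (Fin k → A)) : Prop :=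
  ∀ t : Fin n → Fin k → A, (∀ i, t i ∈ ρ) → (fun j => f fun i => t i j) ∈ ρ

/-- `Pol ρ` is the clone of all operations preserving the relation `ρ`. -/
def Pol {A : Type u} {k : ℕ} (ρ : Set (Fin k → A)) : Set (Ops A) :=
  {f : Ops A | Preserves f.2 ρ}

/-- The order `0 ≤ 1` on the two-element set `ZMod 2`. -/
def BoolLe (a b : ZMod 2) : Prop := a = b ∨ (a = 0 ∧ b = 1)

/-! Each of the five conditions says that `F` is not contained in `Pol ρ` for one of the relations
`x ≤ y`, `x = 0`, `x = 1`, `y = x + 1`, `x + y = z + w`; these are clones, and each of them misses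
some operation, so a generating set satisfies all five conditions.

Conversely, the clone generated by `F` contains all constants and negation: the diagonals of the
witnesses for `0` and `1` give either negation or both constants; with negation, translating the
arguments of a non-self-dual function gives a constant, and with both constants a non-monotone
function restricted to an edge of the cube along which it drops gives negation. Restricting a
non-affine function by constants (induction on the arity) gives a binary function
`uv + αu + βv + γ`, hence conjunction. Finally, negation, conjunction and the constants generate
every operation by the Shannon expansion `f y = f (y|ₙ=0) + yₙ (f (y|ₙ=0) + f (y|ₙ=1))`. -/

open Function

section Clone

variable {A : Type u} {C : Set (Ops A)}

def constOp (a : A) : Ops A := ⟨0, fun _ => a⟩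

namespace IsClone

theorem proj_mem (hC : IsClone C) (n : ℕ) (i : Fin (n + 1)) :
    (⟨n, fun x => x i⟩ : Ops A) ∈ C :=
  hC.1 n i

theorem comp_mem (hC : IsClone C) {n m : ℕ} {f : (Fin (n + 1) → A) → A}
    {g : Fin (n + 1) → (Fin (m + 1) → A) → A} (hf : (⟨n, f⟩ : Ops A) ∈ C)
    (hg : ∀ i, (⟨m, g i⟩ : Ops A) ∈ C) : (⟨m, fun x => f fun i => g i x⟩ : Ops A) ∈ C :=
  hC.2 n m f g hf hg

theorem comp_unary_mem (hC : IsClone C) {m : ℕ} {u : (Fin 1 → A) → A}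
    {g : (Fin (m + 1) → A) → A} (hu : (⟨0, u⟩ : Ops A) ∈ C) (hg : (⟨m, g⟩ : Ops A) ∈ C) :
    (⟨m, fun x => u fun _ => g x⟩ : Ops A) ∈ C :=
  hC.comp_mem hu fun _ => hg

theorem comp_binary_mem (hC : IsClone C) {m : ℕ} {b : (Fin 2 → A) → A}
    {g h : (Fin (m + 1) → A) → A} (hb : (⟨1, b⟩ : Ops A) ∈ C) (hg : (⟨m, g⟩ : Ops A) ∈ C)
    (hh : (⟨m, h⟩ : Ops A) ∈ C) : (⟨m, fun x => b ![g x, h x]⟩ : Ops A) ∈ C := by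
  convert hC.comp_mem hb (g := ![g, h]) (Fin.forall_fin_two.2 ⟨hg, hh⟩) using 4 with x
  ext i
  fin_cases i <;> rfl

theorem const_mem (hC : IsClone C) {a : A} (ha : constOp a ∈ C) (m : ℕ) :
    (⟨m, fun _ => a⟩ : Ops A) ∈ C :=
  hC.comp_unary_mem ha (hC.proj_mem m 0)

theorem diag_mem (hC : IsClone C) {n : ℕ} {f : (Fin (n + 1) → A) → A}
    (hf : (⟨n, f⟩ : Ops A) ∈ C) : (⟨0, fun t => f fun _ => t 0⟩ : Ops A) ∈ C :=
  hC.comp_mem hf fun _ => hC.proj_mem 0 0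

theorem subst_mem (hC : IsClone C) (hconst : ∀ a, constOp a ∈ C) {n m : ℕ}
    {f : (Fin (n + 1) → A) → A} (hf : (⟨n, f⟩ : Ops A) ∈ C)
    (σ : Fin (n + 1) → Fin (m + 1) ⊕ A) :
    (⟨m, fun x => f fun i => Sum.elim x id (σ i)⟩ : Ops A) ∈ C := by
  refine hC.comp_mem hf fun i => ?_
  cases σ i with
  | inl j => exact hC.proj_mem m j
  | inr a => exact hC.const_mem (hconst a) m

theorem update_mem (hC : IsClone C) (hconst : ∀ a, constOp a ∈ C) {n : ℕ}
    {f : (Fin (n + 1) → A) → A} (hf : (⟨n, f⟩ : Ops A) ∈ C) (z : Fin (n + 1) → A)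
    (j : Fin (n + 1)) : (⟨0, fun t => f (update z j (t 0))⟩ : Ops A) ∈ C := by
  convert hC.subst_mem hconst hf (update (Sum.inr ∘ z) j (.inl 0)) using 4 with t
  ext i
  rcases eq_or_ne i j with rfl | hij <;> simp [*]

theorem snoc_mem (hC : IsClone C) (hconst : ∀ a, constOp a ∈ C) {n : ℕ}
    {f : (Fin (n + 2) → A) → A} (hf : (⟨n + 1, f⟩ : Ops A) ∈ C) (a : A) :
    (⟨n, fun x => f (Fin.snoc x a)⟩ : Ops A) ∈ C := by
  convert hC.subst_mem hconst hf (Fin.snoc Sum.inl (.inr a)) using 4 with x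
  ext i
  induction i using Fin.lastCases <;> simp

end IsClone

theorem isClone_cloneGen (F : Set (Ops A)) : IsClone (cloneGen F) :=
  ⟨fun n i _ hS => hS.1.1 n i,
    fun n m f g hf hg S hS => hS.1.2 n m f g (hf S hS) fun i => hg i S hS⟩

theorem subset_cloneGen (F : Set (Ops A)) : F ⊆ cloneGen F :=
  fun _ hf _ hS => hS.2 hf

theorem cloneGen_subset {F : Set (Ops A)} (hC : IsClone C) (hF : F ⊆ C) : cloneGen F ⊆ C :=
  Set.sInter_subset_of_mem ⟨hC, hF⟩

theorem exists_not_mem_of_cloneGen_eq_univ {F : Set (Ops A)} (hF : cloneGen F = Set.univ)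
    (hC : IsClone C) {g : Ops A} (hg : g ∉ C) : ∃ f ∈ F, f ∉ C := by
  by_contra! hFC
  exact hg (cloneGen_subset hC hFC (hF ▸ Set.mem_univ g))

theorem isClone_Pol {k : ℕ} (ρ : Set (Fin k → A)) : IsClone (Pol ρ) :=
  ⟨fun _ i _ ht => ht i, fun _ _ _ g hf hg t ht => hf (fun i j => g i fun l => t l j)
    fun i => hg i t ht⟩

end Clone

section Relations

variable {A : Type u}

def binRel (R : A → A → Prop) : Set (Fin 2 → A) := {v | R (v 0) (v 1)}

def constRel (a : A) : Set (Fin 1 → A) := {v | v 0 = a}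

def affineRel (R : Type u) [Add R] : Set (Fin 4 → R) := {v | v 0 + v 1 = v 2 + v 3}

def IsAffine {R ι : Type*} [CommSemiring R] [Fintype ι] (f : (ι → R) → R) : Prop :=
  ∃ (c : R) (coef : ι → R), ∀ x, f x = c + ∑ i, coef i * x i

theorem preserves_binRel_iff {n : ℕ} {f : (Fin n → A) → A} {R : A → A → Prop} :
    Preserves f (binRel R) ↔ ∀ x y, (∀ i, R (x i) (y i)) → R (f x) (f y) :=
  ⟨fun h x y hxy => h (fun i => ![x i, y i]) hxy, fun h _ ht => h _ _ ht⟩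

theorem preserves_selfDual_iff {R : Type u} [Add R] [One R] {n : ℕ} {f : (Fin n → R) → R} :
    Preserves f (binRel fun a b => b = a + 1) ↔ ∀ x, f (fun i => x i + 1) = f x + 1 :=
  preserves_binRel_iff.trans
    ⟨fun h x => h x _ fun _ => rfl, fun h x _ hxy => funext hxy ▸ h x⟩

theorem preserves_constRel_iff {n : ℕ} {f : (Fin n → A) → A} {a : A} :
    Preserves f (constRel a) ↔ f (fun _ => a) = a := by
  refine ⟨fun h => h (fun _ _ => a) fun _ => rfl, fun h t ht => ?_⟩
  change f (fun i => t i 0) = a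
  rwa [funext ht]

theorem IsAffine.preserves_affineRel {R : Type u} [CommSemiring R] {n : ℕ}
    {f : (Fin n → R) → R} (hf : IsAffine f) : Preserves f (affineRel R) := by
  obtain ⟨c, coef, hf⟩ := hf
  intro t ht
  change f (fun i => t i 0) + f (fun i => t i 1) = f (fun i => t i 2) + f (fun i => t i 3)
  simp only [hf, add_add_add_comm c, ← Finset.sum_add_distrib, ← mul_add]
  simp only [show ∀ i, t i 0 + t i 1 = t i 2 + t i 3 from ht]

theorem constOp_not_mem_Pol_constRel {a b : A} (hab : b ≠ a) : constOp b ∉ Pol (constRel a) :=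
  fun h => hab (preserves_constRel_iff.1 h)

theorem constOp_not_mem_Pol_selfDual {R : Type u} [Ring R] [Nontrivial R] (a : R) :
    constOp a ∉ Pol (binRel fun a b : R => b = a + 1) := fun h => by
  simpa [constOp] using preserves_selfDual_iff.1 h 0

end Relations

theorem exists_crossing_update {A : Type u} {n : ℕ} (P : (Fin n → A) → Prop) {x y : Fin n → A}
    (hx : P x) (hy : ¬ P y) : ∃ z j, z j = x j ∧ P z ∧ ¬ P (update z j (y j)) := by
  induction n with
  | zero => exact absurd (Subsingleton.elim x y ▸ hx) hy
  | succ n ih =>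
    by_cases h : P (Fin.cons (y 0) (Fin.tail x))
    · obtain ⟨z, j, hzj, hz, hz'⟩ :=
        ih (fun w => P (Fin.cons (y 0) w)) h (by rwa [Fin.cons_self_tail])
      exact ⟨Fin.cons (y 0) z, j.succ, hzj, hz, by rwa [← Fin.cons_update]⟩
    · refine ⟨x, 0, rfl, hx, ?_⟩
      rwa [← Fin.cons_self_tail x, Fin.update_cons_zero]

theorem Fin.update_last_eq_snoc_init {α : Type*} {n : ℕ} (y : Fin (n + 1) → α) (a : α) :
    update y (Fin.last n) a = Fin.snoc (Fin.init y) a := by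
  conv_lhs => rw [← Fin.snoc_init_self y]
  exact Fin.update_snoc_last _ _ _

namespace ZMod

theorem eq_zero_or_eq_one (a : ZMod 2) : a = 0 ∨ a = 1 := by
  revert a; decide

theorem ne_iff_eq_add_one {a b : ZMod 2} : b ≠ a ↔ b = a + 1 := by
  revert a b; decide

end ZMod

section Boolean

def negOp : Ops (ZMod 2) := ⟨0, fun t => t 0 + 1⟩

def andOp : Ops (ZMod 2) := ⟨1, fun t => t 0 * t 1⟩

theorem not_boolLe_iff {a b : ZMod 2} : ¬ BoolLe a b ↔ a = 1 ∧ b = 0 := by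
  unfold BoolLe; revert a b; decide

theorem negOp_not_mem_Pol_binRel_boolLe : negOp ∉ Pol (binRel BoolLe) := fun h =>
  not_boolLe_iff.2 ⟨rfl, rfl⟩
    (preserves_binRel_iff.1 h (fun _ => 0) (fun _ => 1) fun _ => .inr ⟨rfl, rfl⟩)

theorem andOp_not_mem_Pol_affineRel : andOp ∉ Pol (affineRel (ZMod 2)) := fun h => by
  have := h ![![1, 0, 1, 0], ![1, 0, 0, 1]] (by simp [affineRel, andOp, Fin.forall_fin_two])
  simp [affineRel, andOp] at this

theorem shannon_expansion {n : ℕ} (f : (Fin n → ZMod 2) → ZMod 2) (y : Fin n → ZMod 2)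
    (j : Fin n) : f y = f (update y j 0) + y j * (f (update y j 0) + f (update y j 1)) := by
  have hy := update_eq_self j y
  rcases ZMod.eq_zero_or_eq_one (y j) with h | h <;> rw [h] at hy <;> rw [hy, h]
  all_goals grind

theorem unary_ext {u v : (Fin 1 → ZMod 2) → ZMod 2} (h0 : u (fun _ => 0) = v (fun _ => 0))
    (h1 : u (fun _ => 1) = v (fun _ => 1)) : u = v := by
  funext t
  rw [shannon_expansion u t 0, shannon_expansion v t 0]
  simp only [update_eq_const_of_subsingleton, ← Function.const_def, h0, h1]

theorem isAffine_of_unary (f : (Fin 1 → ZMod 2) → ZMod 2) : IsAffine f := by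
  refine ⟨f fun _ => 0, fun _ => f (fun _ => 0) + f fun _ => 1, fun x => ?_⟩
  rw [shannon_expansion f x 0, Fin.sum_univ_one, mul_comm]
  simp only [update_eq_const_of_subsingleton, ← Function.const_def]

theorem IsAffine.of_snoc {n : ℕ} {f : (Fin (n + 2) → ZMod 2) → ZMod 2} {c d : ZMod 2}
    {coef : Fin (n + 1) → ZMod 2} (h0 : ∀ x, f (Fin.snoc x 0) = c + ∑ i, coef i * x i)
    (h1 : ∀ x, f (Fin.snoc x 1) = d + ∑ i, coef i * x i) : IsAffine f := by
  refine ⟨c, Fin.snoc coef (c + d), fun y => ?_⟩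
  rw [shannon_expansion f y (Fin.last _), Fin.update_last_eq_snoc_init,
    Fin.update_last_eq_snoc_init, h0, h1]
  conv_rhs => rw [Fin.sum_univ_castSucc]
  simp only [Fin.snoc_castSucc, Fin.snoc_last, Fin.init]
  grind

variable {C : Set (Ops (ZMod 2))}

theorem unary_mem_of_agree {u v : (Fin 1 → ZMod 2) → ZMod 2}
    (hu : (⟨0, u⟩ : Ops (ZMod 2)) ∈ C) (h0 : u (fun _ => 0) = v (fun _ => 0))
    (h1 : u (fun _ => 1) = v (fun _ => 1)) : (⟨0, v⟩ : Ops (ZMod 2)) ∈ C :=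
  unary_ext h0 h1 ▸ hu

namespace IsClone

theorem add_const_comp_mem (hC : IsClone C) (hneg : negOp ∈ C) {m : ℕ}
    {g : (Fin (m + 1) → ZMod 2) → ZMod 2} (hg : (⟨m, g⟩ : Ops (ZMod 2)) ∈ C) (e : ZMod 2) :
    (⟨m, fun x => g x + e⟩ : Ops (ZMod 2)) ∈ C := by
  rcases ZMod.eq_zero_or_eq_one e with rfl | rfl
  · simpa using hg
  · exact hC.comp_unary_mem hneg hg

theorem mul_comp_mem (hC : IsClone C) (hand : andOp ∈ C) {m : ℕ}
    {g h : (Fin (m + 1) → ZMod 2) → ZMod 2} (hg : (⟨m, g⟩ : Ops (ZMod 2)) ∈ C)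
    (hh : (⟨m, h⟩ : Ops (ZMod 2)) ∈ C) : (⟨m, fun x => g x * h x⟩ : Ops (ZMod 2)) ∈ C :=
  hC.comp_binary_mem hand hg hh

theorem forall_constOp_mem (hC : IsClone C) (hneg : negOp ∈ C) {a : ZMod 2}
    (ha : constOp a ∈ C) (b : ZMod 2) : constOp b ∈ C := by
  rcases eq_or_ne b a with rfl | hb
  · exact ha
  · rw [ZMod.ne_iff_eq_add_one.1 hb]
    exact hC.comp_unary_mem hneg ha

theorem negOp_mem_or_constOp_mem (hC : IsClone C) {n₂ n₃ : ℕ}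
    {f₂ : (Fin (n₂ + 1) → ZMod 2) → ZMod 2} {f₃ : (Fin (n₃ + 1) → ZMod 2) → ZMod 2}
    (h₂ : (⟨n₂, f₂⟩ : Ops (ZMod 2)) ∈ C) (hf₂ : f₂ (fun _ => 0) ≠ 0)
    (h₃ : (⟨n₃, f₃⟩ : Ops (ZMod 2)) ∈ C) (hf₃ : f₃ (fun _ => 1) ≠ 1) :
    negOp ∈ C ∨ constOp 0 ∈ C ∧ constOp 1 ∈ C := by
  have h20 := (ZMod.eq_zero_or_eq_one _).resolve_left hf₂
  have h31 := (ZMod.eq_zero_or_eq_one _).resolve_right hf₃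
  rcases ZMod.eq_zero_or_eq_one (f₂ fun _ => 1) with h21 | h21
  · exact .inl (unary_mem_of_agree (hC.diag_mem h₂) (by simp [h20]) (by simp [h21]; decide))
  rcases ZMod.eq_zero_or_eq_one (f₃ fun _ => 0) with h30 | h30
  · exact .inr ⟨unary_mem_of_agree (hC.diag_mem h₃) (by simp [h30]) (by simp [h31]),
      unary_mem_of_agree (hC.diag_mem h₂) (by simp [h20]) (by simp [h21])⟩
  · exact .inl (unary_mem_of_agree (hC.diag_mem h₃) (by simp [h30]) (by simp [h31]; decide))

theorem exists_constOp_mem_of_not_selfDual (hC : IsClone C) (hneg : negOp ∈ C) {n : ℕ}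
    {f : (Fin (n + 1) → ZMod 2) → ZMod 2} (hf : (⟨n, f⟩ : Ops (ZMod 2)) ∈ C)
    (hsd : ∃ x, f (fun i => x i + 1) ≠ f x + 1) : ∃ a, constOp a ∈ C := by
  obtain ⟨x, hx⟩ := hsd
  have hx' : f (fun i => x i + 1) = f x := not_not.1 (mt ZMod.ne_iff_eq_add_one.1 hx)
  refine ⟨f x, unary_mem_of_agree
    (hC.comp_mem hf fun i => hC.add_const_comp_mem hneg (hC.proj_mem 0 0) (x i)) ?_ ?_⟩
  · simp
  · simpa [add_comm] using hx'

theorem negOp_mem_of_not_monotone (hC : IsClone C) (hconst : ∀ a, constOp a ∈ C) {n : ℕ}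
    {f : (Fin (n + 1) → ZMod 2) → ZMod 2} (hf : (⟨n, f⟩ : Ops (ZMod 2)) ∈ C)
    (hmono : ¬ ∀ x y, (∀ i, BoolLe (x i) (y i)) → BoolLe (f x) (f y)) : negOp ∈ C := by
  push Not at hmono
  obtain ⟨x, y, hxy, hfxy⟩ := hmono
  obtain ⟨hx, hy⟩ := not_boolLe_iff.1 hfxy
  obtain ⟨z, j, hzj, hz, hz'⟩ :=
    exists_crossing_update (fun w => f w = 1) (y := y) hx (by simp [hy])
  have hxj : x j ≠ y j := fun h => hz' (by rwa [← h, ← hzj, update_eq_self])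
  obtain ⟨hx0, hy1⟩ := (hxy j).resolve_left hxj
  refine unary_mem_of_agree (hC.update_mem hconst hf z j) ?_ ?_
  · simp [← hx0, ← hzj, hz]
  · have h := (ZMod.eq_zero_or_eq_one _).resolve_right hz'
    rw [hy1] at h
    simp only [h]
    decide

theorem forall_constOp_mem_and_negOp_mem (hC : IsClone C) {n₁ n₂ n₃ n₄ : ℕ}
    {f₁ : (Fin (n₁ + 1) → ZMod 2) → ZMod 2} {f₂ : (Fin (n₂ + 1) → ZMod 2) → ZMod 2}
    {f₃ : (Fin (n₃ + 1) → ZMod 2) → ZMod 2} {f₄ : (Fin (n₄ + 1) → ZMod 2) → ZMod 2}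
    (h₁ : (⟨n₁, f₁⟩ : Ops (ZMod 2)) ∈ C)
    (hf₁ : ¬ ∀ x y, (∀ i, BoolLe (x i) (y i)) → BoolLe (f₁ x) (f₁ y))
    (h₂ : (⟨n₂, f₂⟩ : Ops (ZMod 2)) ∈ C) (hf₂ : f₂ (fun _ => 0) ≠ 0)
    (h₃ : (⟨n₃, f₃⟩ : Ops (ZMod 2)) ∈ C) (hf₃ : f₃ (fun _ => 1) ≠ 1)
    (h₄ : (⟨n₄, f₄⟩ : Ops (ZMod 2)) ∈ C) (hf₄ : ∃ x, f₄ (fun i => x i + 1) ≠ f₄ x + 1) :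
    (∀ a, constOp a ∈ C) ∧ negOp ∈ C := by
  rcases hC.negOp_mem_or_constOp_mem h₂ hf₂ h₃ hf₃ with hneg | ⟨h0, h1⟩
  · obtain ⟨a, ha⟩ := hC.exists_constOp_mem_of_not_selfDual hneg h₄ hf₄
    exact ⟨hC.forall_constOp_mem hneg ha, hneg⟩
  · have hconst (a : ZMod 2) : constOp a ∈ C := by
      rcases ZMod.eq_zero_or_eq_one a with rfl | rfl <;> assumption
    exact ⟨hconst, hC.negOp_mem_of_not_monotone hconst h₁ hf₁⟩

theorem andOp_mem_of_snoc_isAffine (hC : IsClone C) (hconst : ∀ a, constOp a ∈ C)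
    (hneg : negOp ∈ C) {n : ℕ} {f : (Fin (n + 2) → ZMod 2) → ZMod 2}
    (hf : (⟨n + 1, f⟩ : Ops (ZMod 2)) ∈ C) {c d : ZMod 2} {ce de : Fin (n + 1) → ZMod 2}
    (h0 : ∀ x, f (Fin.snoc x 0) = c + ∑ i, ce i * x i)
    (h1 : ∀ x, f (Fin.snoc x 1) = d + ∑ i, de i * x i) {i : Fin (n + 1)} (hi : de i ≠ ce i) :
    andOp ∈ C := by
  have hQ : (⟨1, fun t => f (Fin.snoc (Pi.single i (t 0)) (t 1))⟩ : Ops (ZMod 2)) ∈ C := by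
    convert hC.subst_mem hconst hf (Fin.snoc (update (fun _ => .inr 0) i (.inl 0)) (.inl 1))
      using 4 with t
    ext j
    induction j using Fin.lastCases with
    | last => simp
    | cast j => rcases eq_or_ne j i with rfl | hj <;> simp [*]
  have hQ_eq (u v : ZMod 2) : f (Fin.snoc (Pi.single i u) v) =
      c + ce i * u + v * (c + ce i * u + (d + (ce i + 1) * u)) := by
    rw [← ZMod.ne_iff_eq_add_one.1 hi, shannon_expansion f _ (Fin.last _)]
    simp [Fin.update_last_eq_snoc_init, h0, h1, Pi.single_apply]
  -- Writing `Q u v` for `f (Fin.snoc (Pi.single i u) v)` and `α` for `ce i`, `hQ_eq` says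
  -- `Q u v = c + α u + (c + d) v + u v`, hence `u v = Q (u + c + d) (v + α) + c + α (c + d)`.
  have := hC.add_const_comp_mem hneg (hC.comp_binary_mem hQ
    (hC.add_const_comp_mem hneg (hC.proj_mem 1 0) (c + d))
    (hC.add_const_comp_mem hneg (hC.proj_mem 1 1) (ce i))) (c + ce i * (c + d))
  change (⟨1, fun t => t 0 * t 1⟩ : Ops (ZMod 2)) ∈ C
  convert this using 3 with t
  simp only [Matrix.cons_val_zero, Matrix.cons_val_one, hQ_eq]
  grind

theorem andOp_mem_of_not_isAffine (hC : IsClone C) (hconst : ∀ a, constOp a ∈ C)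
    (hneg : negOp ∈ C) : ∀ {n : ℕ} {f : (Fin (n + 1) → ZMod 2) → ZMod 2},
    (⟨n, f⟩ : Ops (ZMod 2)) ∈ C → ¬ IsAffine f → andOp ∈ C
  | 0, f, _, hf => absurd (isAffine_of_unary f) hf
  | n + 1, f, hmem, hf => by
    by_contra hand
    have restrict_isAffine (a : ZMod 2) : IsAffine fun x => f (Fin.snoc x a) :=
      not_not.1 fun h =>
        hand (hC.andOp_mem_of_not_isAffine hconst hneg (hC.snoc_mem hconst hmem a) h)
    obtain ⟨c, ce, h0⟩ := restrict_isAffine 0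
    obtain ⟨d, de, h1⟩ := restrict_isAffine 1
    obtain ⟨i, hi⟩ : ∃ i, de i ≠ ce i := by
      by_contra! hce
      obtain rfl : de = ce := funext hce
      exact hf (.of_snoc h0 h1)
    exact hand (hC.andOp_mem_of_snoc_isAffine hconst hneg hmem h0 h1 hi)

theorem mux_mem (hC : IsClone C) (hneg : negOp ∈ C) (hand : andOp ∈ C) :
    (⟨2, fun t => t 0 + t 2 * (t 0 + t 1)⟩ : Ops (ZMod 2)) ∈ C := by
  have hnot {g : (Fin 3 → ZMod 2) → ZMod 2} (hg : (⟨2, g⟩ : Ops (ZMod 2)) ∈ C) :=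
    hC.add_const_comp_mem hneg hg 1
  convert hnot (hC.mul_comp_mem hand
    (hnot (hC.mul_comp_mem hand (hC.proj_mem 2 0) (hnot (hC.proj_mem 2 2))))
    (hnot (hC.mul_comp_mem hand (hC.proj_mem 2 1) (hC.proj_mem 2 2)))) using 3 with t
  have : t 2 ^ 2 = t 2 := ZMod.pow_card _
  grind

theorem mem_of_update_last_mem (hC : IsClone C) (hneg : negOp ∈ C) (hand : andOp ∈ C) {n : ℕ}
    {f : (Fin (n + 1) → ZMod 2) → ZMod 2}
    (h : ∀ a, (⟨n, fun y => f (update y (Fin.last n) a)⟩ : Ops (ZMod 2)) ∈ C) :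
    (⟨n, f⟩ : Ops (ZMod 2)) ∈ C := by
  convert hC.comp_mem (hC.mux_mem hneg hand) (g := ![fun y => f (update y (Fin.last n) 0),
    fun y => f (update y (Fin.last n) 1), fun y => y (Fin.last n)])
    (fun k => by fin_cases k <;> simp [h, hC.proj_mem]) using 3 with y
  exact shannon_expansion f y _

theorem eq_univ_of_andOp_mem (hC : IsClone C) (hconst : ∀ a, constOp a ∈ C)
    (hneg : negOp ∈ C) (hand : andOp ∈ C) : C = Set.univ := by
  refine Set.eq_univ_of_forall fun ⟨n, f⟩ => ?_
  induction n with
  | zero =>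
    refine hC.mem_of_update_last_mem hneg hand fun a => ?_
    convert hC.const_mem (hconst (f fun _ => a)) 0 using 3 with y
    exact congrArg f (update_eq_const_of_subsingleton (α := Fin 1) _ _ _)
  | succ n ih =>
    refine hC.mem_of_update_last_mem hneg hand fun a => ?_
    simp only [Fin.update_last_eq_snoc_init]
    exact hC.comp_mem (f := fun x => f (Fin.snoc x a)) (ih _) fun i => hC.proj_mem _ i.castSucc

end IsClone

end Boolean

/-- **Post's Completeness Theorem.**  A set `F` of Boolean functions (operations on the
two-element set, here `ZMod 2`) is complete if and only if `F` contains a function `f₁`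
that is not monotone with respect to the order `0 ≤ 1`, a function `f₂` not fixing `0`,
a function `f₃` not fixing `1`, a function `f₄` that is not self-dual, and a function
`f₅` that is not linear over the two-element field. -/
theorem post_completeness (F : Set (Ops (ZMod 2))) :
    cloneGen F = Set.univ ↔
      ((∃ f ∈ F, ¬ ∀ x y : Fin (f.1 + 1) → ZMod 2,
          (∀ i, BoolLe (x i) (y i)) → BoolLe (f.2 x) (f.2 y)) ∧
      (∃ f ∈ F, f.2 (fun _ => 0) ≠ 0) ∧
      (∃ f ∈ F, f.2 (fun _ => 1) ≠ 1) ∧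
      (∃ f ∈ F, ∃ x : Fin (f.1 + 1) → ZMod 2, f.2 (fun i => x i + 1) ≠ f.2 x + 1) ∧
      (∃ f ∈ F, ¬ ∃ (c : ZMod 2) (coef : Fin (f.1 + 1) → ZMod 2),
          ∀ x : Fin (f.1 + 1) → ZMod 2, f.2 x = c + ∑ i, coef i * x i)) := by
  constructor
  · intro hF
    have escapes {k : ℕ} {ρ : Set (Fin k → ZMod 2)} {g : Ops (ZMod 2)} (hg : g ∉ Pol ρ) :
        ∃ f ∈ F, ¬ Preserves f.2 ρ :=
      exists_not_mem_of_cloneGen_eq_univ hF (isClone_Pol ρ) hg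
    obtain ⟨f₁, h₁, hρ₁⟩ := escapes negOp_not_mem_Pol_binRel_boolLe
    obtain ⟨f₂, h₂, hρ₂⟩ := escapes (constOp_not_mem_Pol_constRel (one_ne_zero (α := ZMod 2)))
    obtain ⟨f₃, h₃, hρ₃⟩ := escapes (constOp_not_mem_Pol_constRel (zero_ne_one (α := ZMod 2)))
    obtain ⟨f₄, h₄, hρ₄⟩ := escapes (constOp_not_mem_Pol_selfDual (0 : ZMod 2))
    obtain ⟨f₅, h₅, hρ₅⟩ := escapes andOp_not_mem_Pol_affineRel
    exact ⟨⟨f₁, h₁, mt preserves_binRel_iff.2 hρ₁⟩, ⟨f₂, h₂, mt preserves_constRel_iff.2 hρ₂⟩,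
      ⟨f₃, h₃, mt preserves_constRel_iff.2 hρ₃⟩,
      ⟨f₄, h₄, not_forall.1 (mt preserves_selfDual_iff.2 hρ₄)⟩,
      ⟨f₅, h₅, mt IsAffine.preserves_affineRel hρ₅⟩⟩
  · rintro ⟨⟨f₁, h₁, hf₁⟩, ⟨f₂, h₂, hf₂⟩, ⟨f₃, h₃, hf₃⟩, ⟨f₄, h₄, hf₄⟩, ⟨f₅, h₅, hf₅⟩⟩
    have hC := isClone_cloneGen F
    have hF := subset_cloneGen F
    obtain ⟨hconst, hneg⟩ := hC.forall_constOp_mem_and_negOp_mem (hF h₁) hf₁ (hF h₂) hf₂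
      (hF h₃) hf₃ (hF h₄) hf₄
    exact hC.eq_univ_of_andOp_mem hconst hneg (hC.andOp_mem_of_not_isAffine hconst hneg (hF h₅) hf₅)
end

section
/- Rosenberg's Theorem on maximal clones on infinite sets. For every infinite set A, the set of maximal clones on A has cardinality 2^{2^{|A|}}. -/
universe u

/-!
For a proper filter `F` on `A`, the operations `f` whose diagonal `a ↦ f (a, …, a)` is the
identity on a set in `F` form a clone containing no fixed-point-free unary operation, while adding
any such operation to it yields all operations. By Zorn's lemma it extends to a maximal clone.
If `X ∈ F` and `Xᶜ ∈ G`, a clone containing the clones of `F` and `G` contains a map fixing `X`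
pointwise and a map fixing `Xᶜ` pointwise whose composite has no fixed point, so it is everything:
disjoint filters lie below distinct maximal clones. An independent family of `2 ^ |A|` subsets of
`A` (Fichtenholz–Kantorovich–Hausdorff), i.e. a map `A → (Set A → Bool)` with dense range,
provides `2 ^ 2 ^ |A|` pairwise disjoint proper filters. Conversely, there are only `2 ^ |A|`
operations on `A`.
-/

open Cardinal Filter Topology Function

variable {A : Type u}

def Ops.ofUnary (σ : A → A) : Ops A := ⟨0, fun x => σ (x 0)⟩

def Ops.diag (f : Ops A) : A → A := fun a => f.2 fun _ => a

namespace IsClone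

variable {C : Set (Ops A)}

lemma ofUnary_comp_mem (hC : IsClone C) {σ : A → A} (hσ : Ops.ofUnary σ ∈ C) {f : Ops A}
    (hf : f ∈ C) : (⟨f.1, fun x => σ (f.2 x)⟩ : Ops A) ∈ C :=
  hC.2 0 f.1 _ (fun _ => f.2) hσ fun _ => hf

/-- Every operation `h` is obtained from the idempotent operation
`(y, x) ↦ if y = x₀ then x₀ else h x` by substituting `σ x₀` for `y`. -/
lemma eq_univ_of_diag_eq_id_mem (hC : IsClone C) (hid : ∀ f : Ops A, f.diag = id → f ∈ C)
    {σ : A → A} (hσC : Ops.ofUnary σ ∈ C) (hσ : ∀ a, σ a ≠ a) : C = Set.univ := by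
  classical
  refine Set.eq_univ_of_forall fun ⟨n, h⟩ => ?_
  let G : (Fin (n + 2) → A) → A := fun z => if z 0 = z 1 then z 1 else h (Fin.tail z)
  have hG : (⟨n + 1, G⟩ : Ops A) ∈ C := hid _ (funext fun a => if_pos rfl)
  let g : Fin (n + 2) → (Fin (n + 1) → A) → A := Fin.cons (fun x => σ (x 0)) fun i x => x i
  have hg : ∀ i, (⟨n, g i⟩ : Ops A) ∈ C :=
    Fin.cases (hC.ofUnary_comp_mem hσC (hC.1 n 0)) (hC.1 n)
  convert hC.2 (n + 1) n G g hG hg using 2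
  funext x
  have hgx : (fun i => g i x) = Fin.cons (σ (x 0)) x := funext (Fin.cases rfl fun _ => rfl)
  simp [G, hgx, hσ]

end IsClone

lemma DirectedOn.isClone_sUnion {c : Set (Set (Ops A))} (hdir : DirectedOn (· ⊆ ·) c)
    (hne : c.Nonempty) (hc : ∀ C ∈ c, IsClone C) : IsClone (⋃₀ c) := by
  obtain ⟨C₀, hC₀⟩ := hne
  refine ⟨fun n i => ⟨C₀, hC₀, (hc C₀ hC₀).1 n i⟩, fun n m f g hf hg => ?_⟩
  obtain ⟨C, hC, hsub⟩ := hdir.exists_mem_subset_of_finite_of_subset_sUnion ⟨C₀, hC₀⟩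
    ((Set.finite_range fun i => (⟨m, g i⟩ : Ops A)).insert ⟨n, f⟩)
    (Set.insert_subset hf (Set.range_subset_iff.2 hg))
  exact ⟨C, hC, (hc C hC).2 n m f g (hsub (Set.mem_insert _ _))
    fun i => hsub (Set.mem_insert_of_mem _ ⟨i, rfl⟩)⟩

lemma exists_isMaximalClone_superset {C : Set (Ops A)} (hC : IsClone C) {s : Ops A}
    (hs : s ∉ C) (htop : ∀ D, IsClone D → C ⊆ D → s ∈ D → D = Set.univ) :
    ∃ M, IsMaximalClone M ∧ C ⊆ M := by
  obtain ⟨M, hCM, hmax⟩ := zorn_subset_nonempty {D | IsClone D ∧ C ⊆ D ∧ s ∉ D}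
    (fun c hc hchain hne => ⟨⋃₀ c,
      ⟨hchain.directedOn.isClone_sUnion hne fun D hD => (hc hD).1,
        (hc hne.some_mem).2.1.trans (Set.subset_sUnion_of_mem hne.some_mem),
        fun ⟨D, hD, hsD⟩ => (hc hD).2.2 hsD⟩,
      fun _ => Set.subset_sUnion_of_mem⟩) C ⟨hC, subset_rfl, hs⟩
  obtain ⟨hM, -, hsM⟩ := hmax.prop
  refine ⟨M, ⟨hM, fun h => hsM (h ▸ trivial), fun D hD hMD => ?_⟩, hCM⟩
  by_cases hsD : s ∈ D
  · exact Or.inr (htop D hD (hCM.trans hMD) hsD)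
  · exact Or.inl (hmax.eq_of_subset ⟨hD, hCM.trans hMD, hsD⟩ hMD).symm

def eventuallyIdempotent (F : Filter A) : Set (Ops A) := {f | ∀ᶠ a in F, f.diag a = a}

lemma isClone_eventuallyIdempotent (F : Filter A) : IsClone (eventuallyIdempotent F) := by
  refine ⟨fun n i => .of_forall fun a => rfl, fun n m f g hf hg => ?_⟩
  filter_upwards [hf, eventually_all.2 hg] with a hfa hga
  simp_all [Ops.diag]

lemma mem_eventuallyIdempotent_of_diag_eq_id {F : Filter A} {f : Ops A} (hf : f.diag = id) :
    f ∈ eventuallyIdempotent F :=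
  .of_forall (congrFun hf)

lemma exists_isMaximalClone_superset_eventuallyIdempotent [Nontrivial A] (F : Filter A)
    [F.NeBot] : ∃ M, IsMaximalClone M ∧ eventuallyIdempotent F ⊆ M := by
  choose σ hσ using fun a : A => exists_ne a
  refine exists_isMaximalClone_superset (isClone_eventuallyIdempotent F) (s := .ofUnary σ)
    (fun h => ?_) fun D hD hFD hσD =>
      hD.eq_univ_of_diag_eq_id_mem (fun f hf => hFD (mem_eventuallyIdempotent_of_diag_eq_id hf))
        hσD hσ
  obtain ⟨a, ha⟩ := Eventually.exists (f := F) h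
  exact hσ a ha

/-- Take `f` retracting `A` onto `X` and `g` moving every point of `X` to another point of `X`. -/
lemma exists_eqOn_id_comp_ne {X : Set A} (hX : X.Nontrivial) :
    ∃ f g : A → A, Set.EqOn f id X ∧ Set.EqOn g id Xᶜ ∧ ∀ a, g (f a) ≠ a := by
  classical
  obtain ⟨x, hx, y, hy, hxy⟩ := hX
  refine ⟨fun a => if a ∈ X then a else x, fun a => if a ∈ X then (if a = x then y else x) else a,
    fun a ha => if_pos ha, fun a ha => if_neg ha, fun a => ?_⟩
  by_cases ha : a ∈ X <;> grind

lemma Set.nontrivial_or_nontrivial_compl [Infinite A] (X : Set A) :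
    X.Nontrivial ∨ Xᶜ.Nontrivial := by
  by_contra! h
  exact Set.infinite_univ ((h.1.finite.union h.2.finite).subset (by simp))

namespace IsClone

variable {C : Set (Ops A)}

lemma eq_univ_of_mem_of_compl_mem (hC : IsClone C) {F G : Filter A}
    (hF : eventuallyIdempotent F ⊆ C) (hG : eventuallyIdempotent G ⊆ C) {X : Set A}
    (hX : X.Nontrivial) (hXF : X ∈ F) (hXG : Xᶜ ∈ G) : C = Set.univ := by
  obtain ⟨f, g, hf, hg, hgf⟩ := exists_eqOn_id_comp_ne hX
  have hfC : Ops.ofUnary f ∈ C := hF (mem_of_superset hXF fun a ha => hf ha)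
  have hgC : Ops.ofUnary g ∈ C := hG (mem_of_superset hXG fun a ha => hg ha)
  exact hC.eq_univ_of_diag_eq_id_mem (fun f hf => hF (mem_eventuallyIdempotent_of_diag_eq_id hf))
    (σ := g ∘ f) (hC.ofUnary_comp_mem hgC hfC) hgf

lemma eq_univ_of_disjoint [Infinite A] (hC : IsClone C) {F G : Filter A} (hFG : Disjoint F G)
    (hF : eventuallyIdempotent F ⊆ C) (hG : eventuallyIdempotent G ⊆ C) : C = Set.univ := by
  obtain ⟨X, hXF, Y, hYG, hXY⟩ := Filter.disjoint_iff.1 hFG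
  have hXG : Xᶜ ∈ G := mem_of_superset hYG hXY.subset_compl_left
  rcases X.nontrivial_or_nontrivial_compl with hX | hX
  · exact hC.eq_univ_of_mem_of_compl_mem hF hG hX hXF hXG
  · exact hC.eq_univ_of_mem_of_compl_mem hG hF hX hXG (by rwa [compl_compl])

end IsClone

lemma mk_le_mk_isMaximalClone [Infinite A] {ι : Type u} (F : ι → Filter A) [∀ i, (F i).NeBot]
    (hF : Pairwise (Disjoint on F)) : #ι ≤ #{M : Set (Ops A) // IsMaximalClone M} := by
  choose M hM hFM using fun i => exists_isMaximalClone_superset_eventuallyIdempotent (F i)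
  refine mk_le_of_injective (f := fun i => ⟨M i, hM i⟩) fun i j hij => by_contra fun hne => ?_
  have hMij : M i = M j := congrArg Subtype.val hij
  exact (hM i).2.1 ((hM i).1.eq_univ_of_disjoint (hF hne) (hFM i) (hMij ▸ hFM j))

lemma denseRange_of_forall_finset {ι X β : Type*} [TopologicalSpace β] [DiscreteTopology β]
    {Φ : X → ι → β} (h : ∀ (T : ι → β) (S : Finset ι), ∃ x, ∀ i ∈ S, Φ x i = T i) :
    DenseRange Φ := by
  refine fun T => mem_closure_iff_nhds.2 fun t ht => ?_
  rw [nhds_pi, mem_pi'] at ht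
  obtain ⟨S, s, hs, hSt⟩ := ht
  obtain ⟨x, hx⟩ := h T S
  exact ⟨Φ x, hSt fun i hi => hx i hi ▸ mem_of_mem_nhds (hs i), x, rfl⟩

lemma exists_finset_separating (S : Finset (Set A)) :
    ∃ F : Finset A, ∀ X ∈ S, ∀ Y ∈ S, (∀ a ∈ F, a ∈ X ↔ a ∈ Y) → X = Y := by
  classical
  have hpair (X Y : Set A) : ∃ F : Finset A, (∀ a ∈ F, a ∈ X ↔ a ∈ Y) → X = Y := by
    by_cases hXY : X = Y
    · exact ⟨∅, fun _ => hXY⟩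
    obtain ⟨a, ha⟩ := not_forall.1 (mt Set.ext hXY)
    exact ⟨{a}, fun h => absurd (h a (Finset.mem_singleton_self a)) ha⟩
  choose sep hsep using hpair
  refine ⟨S.biUnion fun X => S.biUnion (sep X), fun X hX Y hY h => hsep X Y fun a ha => h a ?_⟩
  exact Finset.mem_biUnion.2 ⟨X, hX, Finset.mem_biUnion.2 ⟨Y, hY, ha⟩⟩

open scoped Classical in
/-- The Fichtenholz–Kantorovich–Hausdorff independent family: the code `(F, G)` lies in the
`X`-th member iff the trace of `X` on `F` belongs to `G`. -/
noncomputable def traceCode (c : Finset A × Finset (Finset A)) (X : Set A) : Bool :=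
  decide (c.1.filter (· ∈ X) ∈ c.2)

open scoped Classical in
lemma denseRange_traceCode : DenseRange (traceCode (A := A)) := by
  refine denseRange_of_forall_finset fun T S => ?_
  obtain ⟨F, hF⟩ := exists_finset_separating S
  refine ⟨(F, (S.filter (T · = true)).image fun X => F.filter (· ∈ X)), fun X hX => ?_⟩
  cases hTX : T X
  · refine decide_eq_false fun hmem => ?_
    obtain ⟨Y, hY, htrace⟩ := Finset.mem_image.1 hmem
    rw [Finset.mem_filter] at hY
    have hYX : Y = X := hF Y hY.1 X hX fun a ha => by
      simpa [ha] using congrArg (a ∈ ·) htrace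
    simp [← hYX, hY.2] at hTX
  · exact decide_eq_true (Finset.mem_image_of_mem _ (Finset.mem_filter.2 ⟨hX, hTX⟩))

lemma exists_denseRange_set_bool [Infinite A] : ∃ Φ : A → Set A → Bool, DenseRange Φ := by
  obtain ⟨e⟩ : Nonempty (A ≃ Finset A × Finset (Finset A)) := Cardinal.eq.1 <| by
    rw [mk_prod, lift_id, lift_id, mk_finset_of_infinite, mk_finset_of_infinite,
      mk_finset_of_infinite, mul_eq_self (aleph0_le_mk A)]
  refine ⟨traceCode ∘ e, ?_⟩
  rw [DenseRange, e.surjective.range_comp]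
  exact denseRange_traceCode

lemma mk_ops [Infinite A] : #(Ops A) = 2 ^ #A := by
  have hfib (n : ℕ) : #((Fin (n + 1) → A) → A) = 2 ^ #A := by
    simp only [mk_arrow, lift_id, lift_uzero, mk_fin, lift_natCast, power_natCast]
    rw [power_nat_eq (aleph0_le_mk A) (Nat.le_add_left 1 n), power_self_eq (aleph0_le_mk A)]
  rw [mk_sigma, funext hfib, sum_const, mk_nat, lift_aleph0, lift_uzero,
    aleph0_mul_eq ((aleph0_le_mk A).trans (cantor _).le)]

lemma DenseRange.comap_nhds_neBot {X Y : Type*} [TopologicalSpace Y] {Φ : X → Y}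
    (hΦ : DenseRange Φ) (y : Y) : (comap Φ (𝓝 y)).NeBot :=
  comap_neBot_iff.2 fun _ ht => hΦ.mem_nhds ht

lemma mk_isMaximalClone_le [Infinite A] :
    #{M : Set (Ops A) // IsMaximalClone M} ≤ 2 ^ (2 : Cardinal) ^ #A :=
  calc #{M : Set (Ops A) // IsMaximalClone M} ≤ #(Set (Ops A)) := mk_subtype_le _
    _ = 2 ^ (2 : Cardinal) ^ #A := by rw [mk_set, mk_ops]

lemma two_pow_two_pow_le_mk_isMaximalClone [Infinite A] :
    2 ^ (2 : Cardinal) ^ #A ≤ #{M : Set (Ops A) // IsMaximalClone M} := by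
  obtain ⟨Φ, hΦ⟩ := exists_denseRange_set_bool (A := A)
  have := hΦ.comap_nhds_neBot
  calc 2 ^ (2 : Cardinal) ^ #A = #(Set A → Bool) := by simp
    _ ≤ #{M : Set (Ops A) // IsMaximalClone M} :=
      mk_le_mk_isMaximalClone (fun T => comap Φ (𝓝 T))
        fun _ _ hne => disjoint_comap (disjoint_nhds_nhds.2 hne)

/-- **Rosenberg's Theorem on maximal clones on infinite sets.**  For every infinite set
`A`, the set of maximal clones on `A` has cardinality `2 ^ (2 ^ |A|)`. -/
theorem rosenberg_infinite_maximal_clones {A : Type u} [Infinite A] :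
    Cardinal.mk {M : Set (Ops A) // IsMaximalClone M} =
      (2 : Cardinal.{u}) ^ ((2 : Cardinal.{u}) ^ Cardinal.mk A) :=
  le_antisymm mk_isMaximalClone_le two_pow_two_pow_le_mk_isMaximalClone
end
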